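/- arXiv:1910.11721 — 2 statements merged into one kernel-verified Lean document; each statement's English description precedes it below -/
import Mathlib

section
/- Fix a set of m ≥ 2 alternatives, integers l1 with 0 ≤ l1 ≤ m−1 and l3 with 1 ≤ l3 ≤ m, and any integer k ≥ (l1+l3+1)/2. Then the mixture of k Plackett-Luce models is not identifiable from ranked top orders of length at most l1 together with choice data over subsets of size at most l3: there exist two k-PL parameters whose mixing measures differ, yet for every ranked top-l order with l ≤ l1 and every choice-l order (A', a) with |A'| = l ≤ l3, the two mixtures assign the same marginal probability. -/
/-!
Along the segment of PL parameters in which one alternative has weight `1/m + (m-1)x` and the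
others `1/m - x` (`0 < x < 1/m`), every ranked top-`l` marginal with `l ≤ l₁` and every choice-`l`
marginal with `l ≤ l₃` is a rational function `g / D` of `x` with one common positive denominator
`D` and `deg g ≤ l₁ + l₃ - 1 ≤ 2k - 2`. For `2k` increasing nodes `xⱼ`, the weights
`D(xⱼ) / ∏_{i ≠ j} (xⱼ - xᵢ)` annihilate all such functions (a divided difference of order
`2k - 1` kills polynomials of degree `< 2k - 1`) and alternate in sign. Normalising, the nodes with
positive weight and those with negative weight are two different `k`-mixtures with the same
marginals.
-/

open Finset

/-- `θ` is a Plackett–Luce parameter over `m` alternatives: all entries are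
strictly positive and they sum to one. -/
def IsPLParam {m : ℕ} (θ : Fin m → ℝ) : Prop :=
  (∀ i, 0 < θ i) ∧ (∑ i, θ i = 1)

/-- PL marginal probability of the ranked top-`l` order
`σ 0 ≻ σ 1 ≻ ⋯ ≻ σ (l-1) ≻ others` under the parameter `θ`. -/
noncomputable def PLtop {m l : ℕ} (θ : Fin m → ℝ) (σ : Fin l → Fin m) : ℝ :=
  ∏ p : Fin l, θ (σ p) / (1 - ∑ q ∈ univ.filter (fun q : Fin l => q < p), θ (σ q))

/-- PL marginal probability of the choice order `(A', a)`: alternative `a` is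
chosen from the subset `A'`. -/
noncomputable def PLchoice {m : ℕ} (θ : Fin m → ℝ) (A' : Finset (Fin m)) (a : Fin m) : ℝ :=
  θ a / ∑ j ∈ A', θ j

/-- The mixing measure `∑_r α_r δ_{θ^{(r)}}` of a `k`-mixture, represented as the
finitely supported weight function on the parameter space. -/
noncomputable def mixingMeasure {m k : ℕ} (α : Fin k → ℝ) (θ : Fin k → Fin m → ℝ) :
    (Fin m → ℝ) → ℝ :=
  fun t => ∑ r, if θ r = t then α r else 0

open Polynomial

def IsRationalOn (s : Set ℝ) (D : ℝ[X]) (n : ℕ) (f : ℝ → ℝ) : Prop :=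
  ∃ g : ℝ[X], g.natDegree ≤ n ∧ ∀ x ∈ s, f x * D.eval x = g.eval x

namespace IsRationalOn

variable {s : Set ℝ} {D E : ℝ[X]} {n e : ℕ} {f f' : ℝ → ℝ}

theorem mono (h : IsRationalOn s D n f) {n' : ℕ} (hn : n ≤ n') : IsRationalOn s D n' f :=
  let ⟨g, hg, hfg⟩ := h
  ⟨g, hg.trans hn, hfg⟩

theorem congr (h : IsRationalOn s D n f) (hf : Set.EqOn f f' s) : IsRationalOn s D n f' :=
  let ⟨g, hg, hfg⟩ := h
  ⟨g, hg, fun x hx => hf hx ▸ hfg x hx⟩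

theorem const (c : ℝ) (hE : E.natDegree ≤ e) : IsRationalOn s E e fun _ => c :=
  ⟨C c * E, natDegree_C_mul_le c E |>.trans hE, fun x _ => by simp⟩

theorem mul {D₁ D₂ : ℝ[X]} {n₁ n₂ : ℕ} {f₁ f₂ : ℝ → ℝ} (h₁ : IsRationalOn s D₁ n₁ f₁)
    (h₂ : IsRationalOn s D₂ n₂ f₂) : IsRationalOn s (D₁ * D₂) (n₁ + n₂) fun x => f₁ x * f₂ x := by
  obtain ⟨g₁, hg₁, hfg₁⟩ := h₁
  obtain ⟨g₂, hg₂, hfg₂⟩ := h₂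
  refine ⟨g₁ * g₂, natDegree_mul_le.trans (add_le_add hg₁ hg₂), fun x hx => ?_⟩
  rw [eval_mul, eval_mul, ← hfg₁ x hx, ← hfg₂ x hx]
  ring

theorem mul_denom (h : IsRationalOn s D n f) (hE : E.natDegree ≤ e) :
    IsRationalOn s (D * E) (n + e) f :=
  (h.mul (const 1 hE)).congr fun x _ => mul_one (f x)

theorem denom_mul (h : IsRationalOn s D n f) (hE : E.natDegree ≤ e) :
    IsRationalOn s (E * D) (e + n) f :=
  ((const 1 hE).mul h).congr fun x _ => one_mul (f x)

theorem prod {ι : Type*} (t : Finset ι) {D : ι → ℝ[X]} {n : ι → ℕ} {f : ι → ℝ → ℝ}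
    (h : ∀ i ∈ t, IsRationalOn s (D i) (n i) (f i)) :
    IsRationalOn s (∏ i ∈ t, D i) (∑ i ∈ t, n i) fun x => ∏ i ∈ t, f i x := by
  classical
  induction t using Finset.induction_on with
  | empty => simpa using const (s := s) 1 natDegree_one.le
  | insert i t hi ih =>
    simp only [prod_insert hi, sum_insert hi]
    exact (h i (mem_insert_self i t)).mul (ih fun j hj => h j (mem_insert_of_mem hj))

theorem of_eq_div {N : ℝ → ℝ} (hN : IsRationalOn s 1 n N) (hD : ∀ x ∈ s, D.eval x ≠ 0)
    (hf : ∀ x ∈ s, f x = N x / D.eval x) : IsRationalOn s D n f :=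
  let ⟨g, hg, hNg⟩ := hN
  ⟨g, hg, fun x hx => by
    rw [hf x hx, div_mul_cancel₀ _ (hD x hx), ← hNg x hx, eval_one, mul_one]⟩

end IsRationalOn

theorem sum_eval_div_prod_sub_eq_zero {ι : Type*} [DecidableEq ι] {t : Finset ι} {v : ι → ℝ}
    (hv : Set.InjOn v t) {g : ℝ[X]} (hg : g.natDegree + 2 ≤ #t) :
    ∑ i ∈ t, g.eval (v i) / ∏ j ∈ t.erase i, (v i - v j) = 0 := by
  rw [← Lagrange.coeff_eq_sum hv ((degree_le_natDegree).trans_lt (by exact_mod_cast (by omega)))]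
  exact coeff_eq_zero_of_natDegree_lt (by omega)

theorem IsRationalOn.sum_div_prod_sub_mul_eq_zero {ι : Type*} [DecidableEq ι] {s : Set ℝ}
    {D : ℝ[X]} {n : ℕ} {f : ℝ → ℝ} (hf : IsRationalOn s D n f) {t : Finset ι} {v : ι → ℝ}
    (hv : Set.InjOn v t) (hvs : ∀ i ∈ t, v i ∈ s) (hn : n + 2 ≤ #t) :
    ∑ i ∈ t, D.eval (v i) / (∏ j ∈ t.erase i, (v i - v j)) * f (v i) = 0 := by
  obtain ⟨g, hg, hfg⟩ := hf
  rw [← sum_eval_div_prod_sub_eq_zero hv (g := g) (by omega)]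
  refine sum_congr rfl fun i hi => ?_
  rw [← hfg _ (hvs i hi)]
  ring

theorem neg_one_pow_mul_prod_sub_pos {v : ℕ → ℝ} (hv : StrictMono v) {n j : ℕ} (hj : j < n) :
    0 < (-1) ^ (n - 1 - j) * ∏ i ∈ (range n).erase j, (v j - v i) := by
  have hsplit : (range n).erase j = range j ∪ Ioo j n := by
    ext i
    simp only [mem_erase, mem_range, mem_union, mem_Ioo]
    omega
  have hdisj : Disjoint (range j) (Ioo j n) :=
    disjoint_left.2 fun i hi hi' => by simp only [mem_range, mem_Ioo] at hi hi'; omega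
  have hcard : #(Ioo j n) = n - 1 - j := by rw [Nat.card_Ioo]; omega
  rw [hsplit, prod_union hdisj, mul_left_comm, ← hcard, ← prod_neg]
  refine mul_pos (prod_pos fun i hi => sub_pos.2 (hv (mem_range.1 hi)))
    (prod_pos fun i hi => ?_)
  rw [neg_sub, sub_pos]
  exact hv (mem_Ioo.1 hi).1

theorem sum_range_two_mul {M : Type*} [AddCommMonoid M] (f : ℕ → M) (k : ℕ) :
    ∑ j ∈ range (2 * k), f j = ∑ r ∈ range k, (f (2 * r) + f (2 * r + 1)) := by
  induction k with
  | zero => simp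
  | succ k ih => rw [mul_add_one, sum_range_succ, sum_range_succ, ih, sum_range_succ, add_assoc]

theorem exists_weights_eq_of_isRationalOn {a b : ℝ} (hab : a < b) {k n : ℕ} (hn : n + 2 ≤ 2 * k)
    {D : ℝ[X]} (hD : ∀ x ∈ Set.Ioo a b, 0 < D.eval x) :
    ∃ β β' y z : Fin k → ℝ, (∀ r, 0 < β r) ∧ (∀ r, 0 < β' r) ∧
      (∀ r, y r ∈ Set.Ioo a b) ∧ (∀ r, z r ∈ Set.Ioo a b) ∧ (∀ r r', y r ≠ z r') ∧
      ∀ f, IsRationalOn (Set.Ioo a b) D n f → ∑ r, β r * f (y r) = ∑ r, β' r * f (z r) := by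
  have hh : 0 < (b - a) / (2 * k + 1) := div_pos (sub_pos.2 hab) (by positivity)
  set v : ℕ → ℝ := fun j => a + (j + 1) * ((b - a) / (2 * k + 1))
  have hv : StrictMono v := fun i j hij => by
    simp only [v, add_lt_add_iff_left]
    gcongr
  have hvI : ∀ j < 2 * k, v j ∈ Set.Ioo a b := fun j hj => by
    have hj' : (j : ℝ) + 1 ≤ 2 * k := by exact_mod_cast hj
    constructor
    · simp only [v, lt_add_iff_pos_right]
      positivity
    · have : (j + 1 : ℝ) * ((b - a) / (2 * k + 1)) < b - a := by
        rw [mul_div_assoc', div_lt_iff₀ (by positivity)]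
        nlinarith
      simp only [v]
      linarith
  set w : ℕ → ℝ := fun j => D.eval (v j) / ∏ i ∈ (range (2 * k)).erase j, (v j - v i)
  have hw : ∀ r < k, 0 < w (2 * r + 1) ∧ w (2 * r) < 0 := fun r hr => by
    have hodd := neg_one_pow_mul_prod_sub_pos hv (show 2 * r + 1 < 2 * k by omega)
    have heven := neg_one_pow_mul_prod_sub_pos hv (show 2 * r < 2 * k by omega)
    rw [show 2 * k - 1 - (2 * r + 1) = 2 * (k - 1 - r) by omega, pow_mul, neg_one_sq, one_pow,
      one_mul] at hodd
    rw [show 2 * k - 1 - 2 * r = 2 * (k - 1 - r) + 1 by omega, pow_succ, pow_mul, neg_one_sq,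
      one_pow, one_mul, neg_one_mul, neg_pos] at heven
    exact ⟨div_pos (hD _ (hvI _ (by omega))) hodd,
      div_neg_of_pos_of_neg (hD _ (hvI _ (by omega))) heven⟩
  refine ⟨fun r => w (2 * r + 1), fun r => -w (2 * r), fun r => v (2 * r + 1), fun r => v (2 * r),
    fun r => (hw r r.2).1, fun r => neg_pos.2 (hw r r.2).2, fun r => hvI _ (by omega),
    fun r => hvI _ (by omega), fun r r' => hv.injective.ne (by omega), fun f hf => ?_⟩
  have h : ∑ j ∈ range (2 * k), w j * f (v j) = 0 :=
    hf.sum_div_prod_sub_mul_eq_zero hv.injective.injOn (fun j hj => hvI j (mem_range.1 hj))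
      (by rw [card_range]; omega)
  rw [sum_range_two_mul, sum_add_distrib] at h
  rw [Fin.sum_univ_eq_sum_range (fun r => w (2 * r + 1) * f (v (2 * r + 1))),
    Fin.sum_univ_eq_sum_range (fun r => -w (2 * r) * f (v (2 * r)))]
  simp only [neg_mul, sum_neg_distrib]
  linarith

theorem exists_mixtures_eq_of_isRationalOn {a b : ℝ} (hab : a < b) {k n : ℕ}
    (hn : n + 2 ≤ 2 * k) {D : ℝ[X]} (hD : ∀ x ∈ Set.Ioo a b, 0 < D.eval x)
    (hDdeg : D.natDegree ≤ n) :
    ∃ α α' y z : Fin k → ℝ, (∀ r, 0 < α r) ∧ ∑ r, α r = 1 ∧ (∀ r, 0 < α' r) ∧ ∑ r, α' r = 1 ∧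
      (∀ r, y r ∈ Set.Ioo a b) ∧ (∀ r, z r ∈ Set.Ioo a b) ∧ (∀ r r', y r ≠ z r') ∧
      ∀ f, IsRationalOn (Set.Ioo a b) D n f → ∑ r, α r * f (y r) = ∑ r, α' r * f (z r) := by
  obtain ⟨β, β', y, z, hβ, hβ', hy, hz, hyz, heq⟩ := exists_weights_eq_of_isRationalOn hab hn hD
  have hsum : ∑ r, β r = ∑ r, β' r := by
    simpa using heq _ (IsRationalOn.const 1 hDdeg)
  have hT : 0 < ∑ r, β r := sum_pos (fun r _ => hβ r) ⟨⟨0, by omega⟩, mem_univ _⟩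
  refine ⟨fun r => β r / ∑ r, β r, fun r => β' r / ∑ r, β r, y, z, fun r => div_pos (hβ r) hT,
    by rw [← sum_div, div_self hT.ne'], fun r => div_pos (hβ' r) hT,
    by rw [← sum_div, ← hsum, div_self hT.ne'], hy, hz, hyz, fun f hf => ?_⟩
  simp only [div_mul_eq_mul_div, ← sum_div, heq f hf]

theorem mixingMeasure_ne_of_forall_ne {m k : ℕ} {α α' : Fin k → ℝ} {θ θ' : Fin k → Fin m → ℝ}
    (hα : ∀ r, 0 < α r) (r₀ : Fin k) (hθ : ∀ r, θ' r ≠ θ r₀) :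
    mixingMeasure α θ ≠ mixingMeasure α' θ' := by
  intro h
  have hpos : 0 < mixingMeasure α θ (θ r₀) :=
    (hα r₀).trans_le <| (if_pos rfl).symm.trans_le <|
      single_le_sum (f := fun r => if θ r = θ r₀ then α r else 0)
        (fun r _ => by split_ifs <;> simp [(hα r).le]) (mem_univ r₀)
  have hzero : mixingMeasure α' θ' (θ r₀) = 0 := sum_eq_zero fun r _ => if_neg (hθ r)
  exact hpos.ne' (h ▸ hzero)

theorem PLtop_eq_prod_div_sum_compl {m l : ℕ} {θ : Fin m → ℝ} (hθ : ∑ i, θ i = 1)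
    {σ : Fin l → Fin m} (hσ : Function.Injective σ) :
    PLtop θ σ = ∏ p, θ (σ p) / ∑ i ∈ ((univ.filter (· < p)).image σ)ᶜ, θ i := by
  refine prod_congr rfl fun p _ => ?_
  rw [← hθ, ← sum_compl_add_sum ((univ.filter (· < p)).image σ), sum_image hσ.injOn,
    add_sub_cancel_right]

theorem card_compl_image_filter_lt {m l : ℕ} {σ : Fin l → Fin m} (hσ : Function.Injective σ)
    (p : Fin l) : #((univ.filter (· < p)).image σ)ᶜ = m - p := by
  rw [card_compl, Fintype.card_fin, card_image_of_injective _ hσ,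
    show univ.filter (· < p) = Iio p by ext; simp, Fin.card_Iio]

theorem mem_compl_image_filter_lt {m l : ℕ} {σ : Fin l → Fin m} (hσ : Function.Injective σ)
    (p : Fin l) : σ p ∈ ((univ.filter (· < p)).image σ)ᶜ := by
  simp only [mem_compl, mem_image, mem_filter, mem_univ, true_and, not_exists, not_and]
  exact fun q hq h => hq.ne (hσ h)

section PLFamily

variable {m : ℕ} (i₀ : Fin m)

noncomputable def plFamily (x : ℝ) : Fin m → ℝ :=
  fun i => (1 / m - x) + if i = i₀ then m * x else 0

/-- The weight of any `s`-element set containing `i₀` under `plFamily i₀ x`. -/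
noncomputable def massPoly (m s : ℕ) : ℝ[X] :=
  C ((s : ℝ) / m) + C ((m : ℝ) - s) * X

theorem sum_plFamily (x : ℝ) (B : Finset (Fin m)) :
    ∑ i ∈ B, plFamily i₀ x i = #B * (1 / m - x) + if i₀ ∈ B then m * x else 0 := by
  simp only [plFamily, sum_add_distrib, sum_const, nsmul_eq_mul, sum_ite_eq']

theorem sum_univ_plFamily (x : ℝ) : ∑ i, plFamily i₀ x i = 1 := by
  have hm : (m : ℝ) ≠ 0 := by exact_mod_cast i₀.pos.ne'
  rw [sum_plFamily, if_pos (mem_univ i₀), card_univ, Fintype.card_fin]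
  field_simp
  ring

theorem plFamily_pos {x : ℝ} (hx : x ∈ Set.Ioo (0 : ℝ) (1 / m)) (i : Fin m) :
    0 < plFamily i₀ x i := by
  have : 0 ≤ (m : ℝ) * x := mul_nonneg m.cast_nonneg hx.1.le
  unfold plFamily
  split_ifs <;> linarith [hx.2]

theorem isPLParam_plFamily {x : ℝ} (hx : x ∈ Set.Ioo (0 : ℝ) (1 / m)) :
    IsPLParam (plFamily i₀ x) :=
  ⟨plFamily_pos i₀ hx, sum_univ_plFamily i₀ x⟩

theorem plFamily_injective (hm : m ≠ 1) : Function.Injective (plFamily i₀) := by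
  intro x y h
  have h₀ := congrFun h i₀
  simp only [plFamily, if_pos] at h₀
  have hm' : (m : ℝ) - 1 ≠ 0 := sub_ne_zero.2 (by exact_mod_cast hm)
  exact mul_left_cancel₀ hm' (by linarith)

theorem eval_massPoly (s : ℕ) (x : ℝ) : (massPoly m s).eval x = s * (1 / m - x) + m * x := by
  simp only [massPoly, eval_add, eval_C, eval_mul, eval_X]
  ring

theorem natDegree_massPoly_le (s : ℕ) : (massPoly m s).natDegree ≤ 1 :=
  (natDegree_add_le _ _).trans <| max_le ((natDegree_C _).trans_le zero_le_one) <|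
    (natDegree_C_mul_le _ _).trans natDegree_X_le

theorem massPoly_eval_pos {x : ℝ} (hx : x ∈ Set.Ioo (0 : ℝ) (1 / m)) (s : ℕ) :
    0 < (massPoly m s).eval x := by
  have hm : (0 : ℝ) < m := one_div_pos.1 (hx.1.trans hx.2)
  rw [eval_massPoly]
  have := sub_pos.2 hx.2
  have := hx.1
  positivity

theorem natDegree_prod_massPoly_le {ι : Type*} (t : Finset ι) (f : ι → ℕ) :
    (∏ i ∈ t, massPoly m (f i)).natDegree ≤ #t :=
  (natDegree_prod_le _ _).trans <| by
    simpa using sum_le_card_nsmul t _ 1 fun i _ => natDegree_massPoly_le (f i)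

theorem prod_massPoly_eval_pos {ι : Type*} {x : ℝ} (hx : x ∈ Set.Ioo (0 : ℝ) (1 / m))
    (t : Finset ι) (f : ι → ℕ) : 0 < (∏ i ∈ t, massPoly m (f i)).eval x := by
  rw [eval_prod]
  exact prod_pos fun i _ => massPoly_eval_pos hx (f i)

end PLFamily

section Marginals

variable {m : ℕ} (i₀ : Fin m)

theorem isRationalOn_plFamily (i : Fin m) :
    IsRationalOn (Set.Ioo (0 : ℝ) (1 / m)) 1 1 fun x => plFamily i₀ x i := by
  refine ⟨C (1 / m : ℝ) + C ((if i = i₀ then (m : ℝ) else 0) - 1) * X,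
    (natDegree_add_le _ _).trans <| max_le ((natDegree_C _).trans_le zero_le_one) <|
      (natDegree_C_mul_le _ _).trans natDegree_X_le, fun x _ => ?_⟩
  simp only [plFamily, eval_one, mul_one, eval_add, eval_C, eval_mul, eval_X]
  split_ifs <;> ring

theorem isRationalOn_plFamily_div_sum (B : Finset (Fin m)) {a : Fin m} (ha : a ∈ B) :
    IsRationalOn (Set.Ioo (0 : ℝ) (1 / m)) (massPoly m #B) 1
      fun x => plFamily i₀ x a / ∑ i ∈ B, plFamily i₀ x i := by
  by_cases h : i₀ ∈ B
  · refine (isRationalOn_plFamily i₀ a).of_eq_div (fun x hx => (massPoly_eval_pos hx _).ne')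
      fun x _ => ?_
    rw [sum_plFamily, if_pos h, eval_massPoly]
  · -- all of `B` has the common weight `1/m - x`
    have ha' : a ≠ i₀ := fun h' => h (h' ▸ ha)
    have hB : (#B : ℝ) ≠ 0 := by exact_mod_cast (card_ne_zero_of_mem ha)
    refine (IsRationalOn.const (#B : ℝ)⁻¹ (natDegree_massPoly_le _)).congr fun x hx => ?_
    have hx' : 1 / (m : ℝ) - x ≠ 0 := (sub_pos.2 hx.2).ne'
    rw [sum_plFamily, if_neg h, add_zero]
    simp only [plFamily, if_neg ha', add_zero]
    field_simp

theorem isRationalOn_PLtop {l : ℕ} {σ : Fin l → Fin m} (hσ : Function.Injective σ) :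
    IsRationalOn (Set.Ioo (0 : ℝ) (1 / m)) (∏ p ∈ range l, massPoly m (m - p)) l
      fun x => PLtop (plFamily i₀ x) σ := by
  have h := IsRationalOn.prod univ fun p _ =>
    isRationalOn_plFamily_div_sum i₀ _ (mem_compl_image_filter_lt hσ p)
  simp only [card_compl_image_filter_lt hσ,
    Fin.prod_univ_eq_prod_range (fun p => massPoly m (m - p)), sum_const, card_univ,
    Fintype.card_fin, smul_eq_mul, mul_one] at h
  exact h.congr fun x _ => (PLtop_eq_prod_div_sum_compl (sum_univ_plFamily i₀ x) hσ).symm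

theorem isRationalOn_PLtop_of_le {l l₁ : ℕ} {σ : Fin l → Fin m} (hσ : Function.Injective σ)
    (hl : l ≤ l₁) :
    IsRationalOn (Set.Ioo (0 : ℝ) (1 / m)) (∏ p ∈ range l₁, massPoly m (m - p)) l₁
      fun x => PLtop (plFamily i₀ x) σ := by
  have h := (isRationalOn_PLtop i₀ hσ).mul_denom
    (natDegree_prod_massPoly_le (m := m) (Ico l l₁) fun p => m - p)
  rwa [prod_range_mul_prod_Ico _ hl, Nat.card_Ico, Nat.add_sub_cancel' hl] at h

theorem isRationalOn_PLchoice_of_card_le {l₃ : ℕ} {A' : Finset (Fin m)} (hA' : #A' ≤ l₃)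
    {a : Fin m} (ha : a ∈ A') :
    IsRationalOn (Set.Ioo (0 : ℝ) (1 / m)) (∏ s ∈ Icc 2 l₃, massPoly m s) (l₃ - 1)
      fun x => PLchoice (plFamily i₀ x) A' a := by
  obtain hA₁ | hA₂ := (Nat.one_le_iff_ne_zero.2 (card_ne_zero_of_mem ha)).eq_or_lt
  · obtain ⟨b, rfl⟩ := card_eq_one.1 hA₁.symm
    rw [mem_singleton] at ha
    subst ha
    refine (IsRationalOn.const 1 ((natDegree_prod_massPoly_le _ _).trans (by simp))).congr
      fun x hx => ?_
    simp [PLchoice, (plFamily_pos i₀ hx a).ne']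
  · have hmem : #A' ∈ Icc 2 l₃ := mem_Icc.2 ⟨hA₂, hA'⟩
    have h := (isRationalOn_plFamily_div_sum i₀ A' ha).mul_denom
      (natDegree_prod_massPoly_le (m := m) ((Icc 2 l₃).erase #A') fun s => s)
    rw [mul_prod_erase _ (fun s => massPoly m s) hmem, card_erase_of_mem hmem, Nat.card_Icc] at h
    exact h.mono (by omega)

end Marginals

theorem kPL_nonidentifiable_top_choice_general
    (m l1 l3 k : ℕ) (hm : 2 ≤ m) (hl3 : 1 ≤ l3)
    (hk : l1 + l3 + 1 ≤ 2 * k) :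
    ∃ (α α' : Fin k → ℝ) (θ θ' : Fin k → Fin m → ℝ),
      (∀ r, 0 < α r) ∧ (∑ r, α r = 1) ∧ (∀ r, IsPLParam (θ r)) ∧
      (∀ r, 0 < α' r) ∧ (∑ r, α' r = 1) ∧ (∀ r, IsPLParam (θ' r)) ∧
      mixingMeasure α θ ≠ mixingMeasure α' θ' ∧
      (∀ (l : ℕ), l ≤ l1 → ∀ σ : Fin l → Fin m, Function.Injective σ →
        ∑ r, α r * PLtop (θ r) σ = ∑ r, α' r * PLtop (θ' r) σ) ∧
      (∀ (A' : Finset (Fin m)), A'.card ≤ l3 → ∀ a ∈ A',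
        ∑ r, α r * PLchoice (θ r) A' a = ∑ r, α' r * PLchoice (θ' r) A' a) := by
  let i₀ : Fin m := ⟨0, by omega⟩
  have htop : (∏ p ∈ range l1, massPoly m (m - p)).natDegree ≤ l1 :=
    (natDegree_prod_massPoly_le _ _).trans (card_range l1).le
  have hchoice : (∏ s ∈ Icc 2 l3, massPoly m s).natDegree ≤ l3 - 1 :=
    (natDegree_prod_massPoly_le _ fun s => s).trans (by rw [Nat.card_Icc]; omega)
  have hpos : ∀ x ∈ Set.Ioo (0 : ℝ) (1 / m),
      0 < ((∏ p ∈ range l1, massPoly m (m - p)) * ∏ s ∈ Icc 2 l3, massPoly m s).eval x :=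
    fun x hx => by
      rw [eval_mul]
      exact mul_pos (prod_massPoly_eval_pos hx _ _) (prod_massPoly_eval_pos hx _ _)
  obtain ⟨α, α', y, z, hα, hαsum, hα', hα'sum, hy, hz, hyz, hagree⟩ :=
    exists_mixtures_eq_of_isRationalOn (one_div_pos.2 (Nat.cast_pos.2 (by omega)))
      (by omega : l1 + (l3 - 1) + 2 ≤ 2 * k) hpos
      (natDegree_mul_le.trans (add_le_add htop hchoice))
  refine ⟨α, α', fun r => plFamily i₀ (y r), fun r => plFamily i₀ (z r), hα, hαsum,
    fun r => isPLParam_plFamily i₀ (hy r), hα', hα'sum, fun r => isPLParam_plFamily i₀ (hz r),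
    mixingMeasure_ne_of_forall_ne hα ⟨0, by omega⟩ fun r =>
      (plFamily_injective i₀ (by omega)).ne (hyz _ r).symm,
    fun l hl σ hσ => hagree _ ((isRationalOn_PLtop_of_le i₀ hσ hl).mul_denom hchoice),
    fun A' hA' a ha => hagree _ ((isRationalOn_PLchoice_of_card_le i₀ hA' ha).denom_mul htop)⟩

/-- **Non-identifiability of `k`-PL from ranked top-`l₁` and choice-`l₃` data**
(Corollary 1): if `m ≥ 2`, `l₁ ≤ m - 1`, `1 ≤ l₃ ≤ m` and `k ≥ (l₁+l₃+1)/2`,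
then there are two `k`-PL parameters with different mixing measures giving the
same marginal probability to every ranked top-`l` order with `l ≤ l₁` and to
every choice-`l` order `(A', a)` with `|A'| = l ≤ l₃`. -/
theorem kPL_nonidentifiable_top_choice
    (m l1 l3 k : ℕ) (hm : 2 ≤ m) (hl1 : l1 ≤ m - 1) (hl3 : 1 ≤ l3) (hl3m : l3 ≤ m)
    (hk : l1 + l3 + 1 ≤ 2 * k) :
    ∃ (α α' : Fin k → ℝ) (θ θ' : Fin k → Fin m → ℝ),
      (∀ r, 0 < α r) ∧ (∑ r, α r = 1) ∧ (∀ r, IsPLParam (θ r)) ∧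
      (∀ r, 0 < α' r) ∧ (∑ r, α' r = 1) ∧ (∀ r, IsPLParam (θ' r)) ∧
      mixingMeasure α θ ≠ mixingMeasure α' θ' ∧
      (∀ (l : ℕ), l ≤ l1 → ∀ σ : Fin l → Fin m, Function.Injective σ →
        ∑ r, α r * PLtop (θ r) σ = ∑ r, α' r * PLtop (θ' r) σ) ∧
      (∀ (A' : Finset (Fin m)), A'.card ≤ l3 → ∀ a ∈ A',
        ∑ r, α r * PLchoice (θ r) A' a = ∑ r, α' r * PLchoice (θ' r) A' a) :=
  kPL_nonidentifiable_top_choice_general m l1 l3 k hm hl3 hk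
end

section
/- Let m ≥ 4. If two 2-PL parameters (α, θ^(1), θ^(2)) and (α', θ'^(1), θ'^(2)), with α, α' ∈ (0,1), assign the same marginal probability to every choice-l order (A', a) for every subset A' ⊆ A with |A'| ∈ {2, 3, 4} and every a ∈ A', then their mixing measures coincide: α δ_{θ^(1)} + (1−α) δ_{θ^(2)} = α' δ_{θ'^(1)} + (1−α') δ_{θ'^(2)}. In other words, the mixture of two Plackett-Luce models over m ≥ 4 alternatives is identifiable (modulo label switching) from choice data over all subsets of sizes 2, 3, and 4. -/
open Finset

/-- The mixing measure `α δ_{θ₁} + (1-α) δ_{θ₂}` of a 2-mixture, represented as the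
finitely supported weight function on the parameter space. -/
noncomputable def mixing2 {m : ℕ} (α : ℝ) (θ1 θ2 : Fin m → ℝ) : (Fin m → ℝ) → ℝ :=
  fun t => (if θ1 = t then α else 0) + (if θ2 = t then 1 - α else 0)

/-!
On four alternatives write `x = (θ1, θ2, θ1', θ2')`, renormalised, and
`ν = (α, 1 - α, -α', -(1 - α'))`; the data say `∑ k, ν k * PLchoice (x k) S i = 0` for every `S`.
The full set gives `∑ k, ν k • x k = 0`, so the matrix with columns `x k` is singular and some
`z ≠ 0` is orthogonal to every `x k`. The sets missing one alternative `l` show that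
`∑ k, (ν k * o k) • x k`, with `o k = x k l / (1 - x k l)` the odds, is supported on `l`; pairing
with `z` kills it whenever `z l ≠ 0`, which happens for two values of `l`. Either such a relation
is independent of `ν`, or the odds, hence the `l`-th coordinates, of all `x k` agree; either way
the four points lie on a line `x k = m k • h + a`.

On that line `PLchoice` is affine in `1 / (m k * H + A)`, where `A` and `H` are the sums of `a`
and `h` over `S`, and two sets with independent `(A, H)` yield `∑ k, ν k * m k ^ j = 0` for
`j ≤ 3`. A two-point distribution on `ℝ` is determined by its first three moments, which
identifies the mixtures on every four alternatives. The identifications glue, since all four-sets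
through a pair `p, q` on which `θ1` and `θ2` have different ratios match the components in the
same way.
-/

theorem IsPLParam.lt_one {n : ℕ} {θ : Fin n → ℝ} (hθ : IsPLParam θ) {i j : Fin n} (hij : i ≠ j) :
    θ i < 1 := by
  have : θ i + θ j ≤ ∑ k, θ k := by
    rw [← Finset.sum_pair hij]
    exact Finset.sum_le_sum_of_subset_of_nonneg (Finset.subset_univ _)
      fun k _ _ => (hθ.1 k).le
  linarith [hθ.1 j, hθ.2]

theorem IsPLParam.eq_of_mul_eq_mul {m : ℕ} {u v : Fin m → ℝ} (hu : IsPLParam u) (hv : IsPLParam v)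
    (p : Fin m) (h : ∀ k, u p * v k = u k * v p) : u = v := by
  have hp : u p = v p := by
    have := Finset.sum_congr (s₁ := univ) rfl fun k _ => h k
    rwa [← Finset.mul_sum, ← Finset.sum_mul, hu.2, hv.2, mul_one, one_mul] at this
  funext k
  have := h k
  rw [hp, mul_comm (u k)] at this
  exact (mul_left_cancel₀ (hv.1 p).ne' this).symm

theorem PLchoice_singleton {m : ℕ} {θ : Fin m → ℝ} {i : Fin m} (hθ : θ i ≠ 0) :
    PLchoice θ {i} i = 1 := by
  simp [PLchoice, hθ]

/-- Equality of the mixing measures `w δ_x + (1 - w) δ_y` and `w' δ_x' + (1 - w') δ_y'` when the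
weights lie in `(0, 1)`. -/
def SameMixture {X : Type*} (w : ℝ) (x y : X) (w' : ℝ) (x' y' : X) : Prop :=
  (x' = x ∧ y' = y ∧ (w' = w ∨ x = y)) ∨ (x' = y ∧ y' = x ∧ (w' = 1 - w ∨ x = y))

namespace SameMixture

variable {X Y : Type*} {w w' : ℝ} {x y x' y' : X}

theorem of_eq (hy : y = x) (hx' : x' = x) (hy' : y' = x) : SameMixture w x y w' x' y' :=
  Or.inl ⟨hx', hy'.trans hy.symm, Or.inr hy.symm⟩

theorem map (f : X → Y) (h : SameMixture w x y w' x' y') :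
    SameMixture w (f x) (f y) w' (f x') (f y') := by
  rcases h with ⟨rfl, rfl, hw | rfl⟩ | ⟨rfl, rfl, hw | rfl⟩
  · exact Or.inl ⟨rfl, rfl, Or.inl hw⟩
  · exact Or.inl ⟨rfl, rfl, Or.inr rfl⟩
  · exact Or.inr ⟨rfl, rfl, Or.inl hw⟩
  · exact Or.inr ⟨rfl, rfl, Or.inr rfl⟩

theorem mixing2_eq {m : ℕ} {θ1 θ2 θ1' θ2' : Fin m → ℝ} (h : SameMixture w θ1 θ2 w' θ1' θ2') :
    mixing2 w θ1 θ2 = mixing2 w' θ1' θ2' := by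
  funext t
  rcases h with ⟨rfl, rfl, rfl | rfl⟩ | ⟨rfl, rfl, rfl | rfl⟩ <;>
    simp only [mixing2] <;> split_ifs <;> ring

theorem eq_of_self (h : SameMixture w x x w' x' y') : x' = x ∧ y' = x := by
  rcases h with ⟨h1, h2, -⟩ | ⟨h1, h2, -⟩ <;> exact ⟨h1, h2⟩

theorem eq_or_swap_of_ne (h : SameMixture w x y w' x' y') (hxy : x ≠ y) :
    (x' = x ∧ y' = y ∧ w' = w) ∨ (x' = y ∧ y' = x ∧ w' = 1 - w) := by
  rcases h with ⟨h1, h2, hw | hw⟩ | ⟨h1, h2, hw | hw⟩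
  exacts [Or.inl ⟨h1, h2, hw⟩, absurd hw hxy, Or.inr ⟨h1, h2, hw⟩, absurd hw hxy]

/-- Mixtures glue along a family of maps `ρ i` that jointly separate the points of `s`, provided
some invariant `π`, which every `ρ i` determines, separates the components of the first mixture. -/
theorem of_forall {ι Z : Type*} [Nonempty ι] {s : Set X} {ρ : ι → X → Y} (π : X → Z)
    (hρ : ∀ u ∈ s, ∀ v ∈ s, (∀ i, ρ i u = ρ i v) → u = v)
    (hπ : ∀ i, ∀ u ∈ s, ∀ v ∈ s, ρ i u = ρ i v → π u = π v) (hx : x ∈ s) (hy : y ∈ s)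
    (hx' : x' ∈ s) (hy' : y' ∈ s) (hsep : x ≠ y → π x ≠ π y)
    (h : ∀ i, SameMixture w (ρ i x) (ρ i y) w' (ρ i x') (ρ i y')) :
    SameMixture w x y w' x' y' := by
  by_cases hxy : x = y
  · subst hxy
    exact .of_eq rfl (hρ x' hx' x hx fun i => (h i).eq_of_self.1)
      (hρ y' hy' x hx fun i => (h i).eq_of_self.2)
  have hπxy := hsep hxy
  have hcases := fun i => (h i).eq_or_swap_of_ne fun he => hπxy (hπ i x hx y hy he)
  obtain ⟨i₀⟩ := ‹Nonempty ι›
  rcases hcases i₀ with ⟨h1, -, hw⟩ | ⟨h1, -, hw⟩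
  · have hall : ∀ i, ρ i x' = ρ i x ∧ ρ i y' = ρ i y := fun i => by
      rcases hcases i with ⟨h1', h2', -⟩ | ⟨h1', -, -⟩
      · exact ⟨h1', h2'⟩
      · exact absurd ((hπ i₀ _ hx' _ hx h1).symm.trans (hπ i _ hx' _ hy h1')) hπxy
    exact Or.inl ⟨hρ x' hx' x hx fun i => (hall i).1, hρ y' hy' y hy fun i => (hall i).2,
      Or.inl hw⟩
  · have hall : ∀ i, ρ i x' = ρ i y ∧ ρ i y' = ρ i x := fun i => by
      rcases hcases i with ⟨h1', -, -⟩ | ⟨h1', h2', -⟩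
      · exact absurd ((hπ i _ hx' _ hx h1').symm.trans (hπ i₀ _ hx' _ hy h1)) hπxy
      · exact ⟨h1', h2'⟩
    exact Or.inr ⟨hρ x' hx' y hy fun i => (hall i).1, hρ y' hy' x hx fun i => (hall i).2,
      Or.inl hw⟩

end SameMixture

theorem eq_zero_of_convex_comb_sq_eq_zero {w u v : ℝ} (hw : 0 < w ∧ w < 1)
    (h : w * u ^ 2 + (1 - w) * v ^ 2 = 0) : u = 0 ∧ v = 0 := by
  have hu : 0 ≤ w * u ^ 2 := mul_nonneg hw.1.le (sq_nonneg u)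
  have hv : 0 ≤ (1 - w) * v ^ 2 := mul_nonneg (by linarith [hw.2]) (sq_nonneg v)
  obtain ⟨hu0, hv0⟩ := (add_eq_zero_iff_of_nonneg hu hv).mp h
  exact ⟨by simpa [hw.1.ne'] using hu0, by simpa [(sub_pos.mpr hw.2).ne'] using hv0⟩

theorem sameMixture_of_moments {w w' x y x' y' : ℝ} (hw : 0 < w ∧ w < 1)
    (hw' : 0 < w' ∧ w' < 1)
    (h1 : w * x + (1 - w) * y = w' * x' + (1 - w') * y')
    (h2 : w * x ^ 2 + (1 - w) * y ^ 2 = w' * x' ^ 2 + (1 - w') * y' ^ 2)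
    (h3 : w * x ^ 3 + (1 - w) * y ^ 3 = w' * x' ^ 3 + (1 - w') * y' ^ 3) :
    SameMixture w x y w' x' y' := by
  by_cases hxy : x = y
  · subst hxy
    obtain ⟨hx', hy'⟩ := eq_zero_of_convex_comb_sq_eq_zero hw' (u := x' - x) (v := y' - x)
      (by linear_combination 2 * x * h1 - h2)
    exact .of_eq rfl (by linarith) (by linarith)
  have hxy' : x' ≠ y' := by
    rintro rfl
    obtain ⟨hx, hy⟩ := eq_zero_of_convex_comb_sq_eq_zero hw (u := x - x') (v := y - x')
      (by linear_combination h2 - 2 * x' * h1)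
    exact hxy (by linarith)
  -- `(t - x) * (t - y)` and `t * (t - x) * (t - y)` integrate to zero against both mixtures
  have hq : w' * ((x' - x) * (x' - y)) + (1 - w') * ((y' - x) * (y' - y)) = 0 := by
    linear_combination (x + y) * h1 - h2
  have hqt : w' * (x' * ((x' - x) * (x' - y))) + (1 - w') * (y' * ((y' - x) * (y' - y))) = 0 := by
    linear_combination (x + y) * h2 - x * y * h1 - h3
  have hx' : (x' - x) * (x' - y) = 0 := by
    have : w' * (x' - y') * ((x' - x) * (x' - y)) = 0 := by linear_combination hqt - y' * hq
    simpa [hw'.1.ne', sub_ne_zero.mpr hxy'] using this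
  have hy' : (y' - x) * (y' - y) = 0 := by
    have : (1 - w') * (x' - y') * ((y' - x) * (y' - y)) = 0 := by
      linear_combination x' * hq - hqt
    simpa [(sub_pos.mpr hw'.2).ne', sub_ne_zero.mpr hxy'] using this
  rcases mul_eq_zero.mp hx' with hx | hx <;> rcases mul_eq_zero.mp hy' with hy | hy <;>
    rw [sub_eq_zero] at hx hy <;> subst hx hy
  · exact absurd rfl hxy'
  · refine Or.inl ⟨rfl, rfl, Or.inl ?_⟩
    have : (w' - w) * (x' - y') = 0 := by linear_combination -h1
    simpa [sub_eq_zero, hxy'] using this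
  · refine Or.inr ⟨rfl, rfl, Or.inl ?_⟩
    have : (w' - (1 - w)) * (x' - y') = 0 := by linear_combination -h1
    simpa [sub_eq_zero, hxy'] using this
  · exact absurd rfl hxy'

theorem Fin.exists_univ_eq_of_ne : ∀ p q : Fin 4, p ≠ q → ∃ r s : Fin 4, p ≠ r ∧ p ≠ s ∧ q ≠ r ∧
    q ≠ s ∧ r ≠ s ∧ (univ : Finset (Fin 4)) = {p, q, r, s} := by
  decide

theorem Fin.exists_perm_apply_zero_one : ∀ p q : Fin 4, p ≠ q →
    ∃ σ : Equiv.Perm (Fin 4), σ 0 = p ∧ σ 1 = q := by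
  decide

/-- Along a line of parameters, the choice probability `(m * β + α) / (m * H + A)` is
`β / H + (α * H - β * A) / (H * (m * H + A))`. -/
theorem sum_inv_eq_zero_of_sum_div_eq_zero {ι : Type*} [Fintype ι] {ν m : ι → ℝ}
    (hν : ∑ k, ν k = 0) {A H α β : ℝ} (hH : H ≠ 0) (hδ : α * H ≠ β * A)
    (hD : ∀ k, m k * H + A ≠ 0) (h : ∑ k, ν k * ((m k * β + α) / (m k * H + A)) = 0) :
    ∑ k, ν k / (m k * H + A) = 0 := by
  have hsplit : ∀ k, ν k * ((m k * β + α) / (m k * H + A))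
      = β / H * ν k + (α * H - β * A) / H * (ν k / (m k * H + A)) := by
    intro k
    field_simp [hD k]
    ring
  simp only [hsplit, Finset.sum_add_distrib, ← Finset.mul_sum, hν, mul_zero, zero_add] at h
  simpa [hH, sub_ne_zero.mpr hδ] using h

theorem moment_combination_eq_zero_of_sum_inv_eq_zero {ν m : Fin 4 → ℝ} (hν0 : ∑ k, ν k = 0)
    (hν1 : ∑ k, ν k * m k = 0) {A H : ℝ} (hH : H ≠ 0) (hD : ∀ k, m k * H + A ≠ 0)
    (h : ∑ k, ν k / (m k * H + A) = 0) :
    (∑ k, ν k * m k ^ 2) * A + ((∑ k, m k) * (∑ k, ν k * m k ^ 2) - ∑ k, ν k * m k ^ 3) * H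
      = 0 := by
  simp only [Fin.sum_univ_four] at *
  rw [div_add_div _ _ (hD 0) (hD 1), div_add_div _ _ (mul_ne_zero (hD 0) (hD 1)) (hD 2),
    div_add_div _ _ (mul_ne_zero (mul_ne_zero (hD 0) (hD 1)) (hD 2)) (hD 3), div_eq_zero_iff] at h
  replace h := h.resolve_right (by simp [hD])
  set e1 := m 0 + m 1 + m 2 + m 3
  set e2 := m 0 * m 1 + m 0 * m 2 + m 0 * m 3 + m 1 * m 2 + m 1 * m 3 + m 2 * m 3
  set e3 := m 0 * m 1 * m 2 + m 0 * m 1 * m 3 + m 0 * m 2 * m 3 + m 1 * m 2 * m 3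
  -- the numerator `∑ k, ν k * ∏ j ≠ k, (m j * H + A)` is a polynomial in the moments of `ν`
  have key : H ^ 2 * (A * (ν 0 * m 0 ^ 2 + ν 1 * m 1 ^ 2 + ν 2 * m 2 ^ 2 + ν 3 * m 3 ^ 2) +
      H * (e1 * (ν 0 * m 0 ^ 2 + ν 1 * m 1 ^ 2 + ν 2 * m 2 ^ 2 + ν 3 * m 3 ^ 2) -
        (ν 0 * m 0 ^ 3 + ν 1 * m 1 ^ 3 + ν 2 * m 2 ^ 3 + ν 3 * m 3 ^ 3))) = 0 := by
    linear_combination h - (A ^ 3 + A ^ 2 * H * e1 + A * H ^ 2 * e2 + H ^ 3 * e3) * hν0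
      + (A ^ 2 * H + A * H ^ 2 * e1 + H ^ 3 * e2) * hν1
  have := (mul_eq_zero.mp key).resolve_left (pow_ne_zero 2 hH)
  linear_combination this

theorem exists_mul_ne_mul {ι : Type*} [Fintype ι] {a h : ι → ℝ} (ha : ∀ i, 0 < a i)
    (hsh : ∑ i, h i = 0) (hh : h ≠ 0) : ∃ p q, a p * h q ≠ a q * h p ∧ h p ≠ 0 := by
  obtain ⟨p, q, hpq⟩ : ∃ p q, a p * h q ≠ a q * h p := by
    by_contra! hprop
    apply hh
    funext q
    have hq : h q * ∑ p, a p = 0 := by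
      rw [Finset.mul_sum, ← mul_zero (a q), ← hsh, Finset.mul_sum]
      exact Finset.sum_congr rfl fun p _ => by rw [mul_comm, hprop p q]
    have : 0 < ∑ p, a p := Finset.sum_pos (fun p _ => ha p) ⟨q, Finset.mem_univ q⟩
    simpa [this.ne'] using hq
  by_cases hp : h p = 0
  · refine ⟨q, p, fun h' => hpq h'.symm, fun hq => hpq ?_⟩
    simp [hp, hq]
  · exact ⟨p, q, hpq, hp⟩

theorem exists_mem_mul_sum_ne {ι : Type*} {a h : ι → ℝ} {S : Finset ι} (hH : ∑ k ∈ S, h k ≠ 0)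
    {i j : ι} (hi : i ∈ S) (hj : j ∈ S) (hij : a i * h j ≠ a j * h i) :
    ∃ k ∈ S, a k * ∑ l ∈ S, h l ≠ h k * ∑ l ∈ S, a l := by
  by_contra! hprop
  apply hij
  have : (∑ l ∈ S, h l) * (a i * h j - a j * h i) = 0 := by
    linear_combination h j * hprop i hi - h i * hprop j hj
  simpa [hH, sub_eq_zero] using this

theorem eq_zero_of_two_eqs {u v A H A' H' : ℝ} (h₁ : u * A + v * H = 0)
    (h₂ : u * A' + v * H' = 0) (hdet : A * H' ≠ A' * H) : u = 0 ∧ v = 0 := by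
  have hu : (A * H' - A' * H) * u = 0 := by linear_combination H' * h₁ - H * h₂
  have hv : (A * H' - A' * H) * v = 0 := by linear_combination A * h₂ - A' * h₁
  simp only [mul_eq_zero, sub_eq_zero, hdet, false_or] at hu hv
  exact ⟨hu, hv⟩

theorem eq_zero_of_forall_subset_of_add_eq_zero {a h : Fin 4 → ℝ} (ha : ∀ i, 0 < a i)
    (hsh : h 0 + h 1 + h 2 + h 3 = 0) (h0 : h 0 ≠ 0) (h01 : a 0 * h 1 ≠ a 1 * h 0)
    (hH : h 0 + h 1 = 0) {u v : ℝ}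
    (huv : ∀ S : Finset (Fin 4), ∑ i ∈ S, h i ≠ 0 → ∀ i ∈ S, ∀ j ∈ S, a i * h j ≠ a j * h i →
      u * ∑ i ∈ S, a i + v * ∑ i ∈ S, h i = 0) : u = 0 ∧ v = 0 := by
  have := ha 0; have := ha 1; have := ha 2; have := ha 3
  by_cases h2 : h 2 = 0
  · have h3 : h 3 = 0 := by linarith
    have h1 : h 1 = -h 0 := by linarith
    have e₁ : u * (a 0 + a 2 + a 3) + v * h 0 = 0 := by
      simpa [Finset.sum_insert, h2, h3, add_assoc] using
        huv {0, 2, 3} (by simpa [Finset.sum_insert, h2, h3]) 0 (by simp) 2 (by simp)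
          (by simp [h2, h0, (ha 2).ne'])
    have e₂ : u * (a 1 + a 2 + a 3) + v * -h 0 = 0 := by
      simpa [Finset.sum_insert, h1, h2, h3, add_assoc] using
        huv {1, 2, 3} (by simpa [Finset.sum_insert, h1, h2, h3]) 1 (by simp) 2 (by simp)
          (by simp [h1, h2, h0, (ha 2).ne'])
    refine eq_zero_of_two_eqs e₁ e₂ fun hz => h0 ?_
    have : h 0 * (a 0 + a 1 + 2 * (a 2 + a 3)) = 0 := by linear_combination -hz
    exact (mul_eq_zero.mp this).resolve_right (by positivity)
  · have h3 : h 3 = -h 2 := by linarith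
    have e₁ : u * (a 0 + a 1 + a 2) + v * h 2 = 0 := by
      simpa [Finset.sum_insert, hH, ← add_assoc] using
        huv {0, 1, 2} (by simpa [Finset.sum_insert, hH, ← add_assoc]) 0 (by simp) 1 (by simp) h01
    have e₂ : u * (a 0 + a 1 + a 3) + v * -h 2 = 0 := by
      simpa [Finset.sum_insert, hH, h3, ← add_assoc] using
        huv {0, 1, 3} (by simpa [Finset.sum_insert, hH, h3, ← add_assoc]) 0 (by simp) 1 (by simp)
          h01
    refine eq_zero_of_two_eqs e₁ e₂ fun hz => h2 ?_
    have : h 2 * (2 * (a 0 + a 1) + a 2 + a 3) = 0 := by linear_combination -hz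
    exact (mul_eq_zero.mp this).resolve_right (by positivity)

theorem eq_zero_of_forall_subset_of_add_ne_zero {a h : Fin 4 → ℝ} (ha : ∀ i, 0 < a i)
    (hsh : h 0 + h 1 + h 2 + h 3 = 0) (h01 : a 0 * h 1 ≠ a 1 * h 0) (hH : h 0 + h 1 ≠ 0)
    {u v : ℝ}
    (huv : ∀ S : Finset (Fin 4), ∑ i ∈ S, h i ≠ 0 → ∀ i ∈ S, ∀ j ∈ S, a i * h j ≠ a j * h i →
      u * ∑ i ∈ S, a i + v * ∑ i ∈ S, h i = 0) : u = 0 ∧ v = 0 := by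
  have := ha 0; have := ha 1; have := ha 2; have := ha 3
  have e₁ : u * (a 0 + a 1) + v * (h 0 + h 1) = 0 := by
    simpa using huv {0, 1} (by simpa) 0 (by simp) 1 (by simp) h01
  by_cases h23 : a 2 * h 3 = a 3 * h 2
  · have h3 : h 3 ≠ 0 := fun h3 => by
      rw [h3, mul_zero, zero_eq_mul] at h23
      exact hH (by linarith [h23.resolve_left (ha 3).ne'])
    have h2 : h 2 ≠ 0 := fun h2 => by
      rw [h2, mul_zero, mul_eq_zero] at h23
      exact h23.elim (ha 2).ne' h3
    have h012 : h 0 + h 1 + h 2 ≠ 0 := fun hz => h3 (by linarith)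
    have e₂ : u * (a 0 + a 1 + a 2) + v * (h 0 + h 1 + h 2) = 0 := by
      simpa [Finset.sum_insert, ← add_assoc] using
        huv {0, 1, 2} (by simpa [Finset.sum_insert, ← add_assoc]) 0 (by simp) 1 (by simp) h01
    refine eq_zero_of_two_eqs e₁ e₂ fun hz => h2 ?_
    have : h 2 * a 3 * (a 0 + a 1 + a 2 + a 3) = 0 := by
      linear_combination a 3 * hz + a 3 * a 2 * hsh - a 3 * h23
    simpa [(ha 3).ne', (by positivity : a 0 + a 1 + a 2 + a 3 ≠ 0)] using this
  · have e₂ : u * (a 2 + a 3) + v * (h 2 + h 3) = 0 := by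
      simpa using huv {2, 3} (by simpa using fun hz => hH (by linarith)) 2 (by simp) 3 (by simp) h23
    refine eq_zero_of_two_eqs e₁ e₂ fun hz => hH ?_
    have : (h 0 + h 1) * (a 0 + a 1 + a 2 + a 3) = 0 := by
      linear_combination -hz + (a 0 + a 1) * hsh
    exact (mul_eq_zero.mp this).resolve_right (by positivity)

theorem eq_zero_of_forall_subset {a h : Fin 4 → ℝ} (ha : ∀ i, 0 < a i) (hsh : ∑ i, h i = 0)
    (hh : h ≠ 0) {u v : ℝ}
    (huv : ∀ S : Finset (Fin 4), ∑ i ∈ S, h i ≠ 0 → ∀ i ∈ S, ∀ j ∈ S, a i * h j ≠ a j * h i →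
      u * ∑ i ∈ S, a i + v * ∑ i ∈ S, h i = 0) : u = 0 ∧ v = 0 := by
  obtain ⟨p, q, hpq, hp⟩ := exists_mul_ne_mul ha hsh hh
  obtain ⟨σ, rfl, rfl⟩ :=
    Fin.exists_perm_apply_zero_one p q fun h' => hpq (by rw [h'])
  have huvσ : ∀ S : Finset (Fin 4), ∑ i ∈ S, h (σ i) ≠ 0 → ∀ i ∈ S, ∀ j ∈ S,
      a (σ i) * h (σ j) ≠ a (σ j) * h (σ i) →
      u * ∑ i ∈ S, a (σ i) + v * ∑ i ∈ S, h (σ i) = 0 := fun S hH i hi j hj hij => by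
    simpa [Finset.sum_map] using huv (S.map σ.toEmbedding) (by simpa [Finset.sum_map] using hH)
      (σ i) (Finset.mem_map_of_mem _ hi) (σ j) (Finset.mem_map_of_mem _ hj) hij
  rw [← Equiv.sum_comp σ, Fin.sum_univ_four] at hsh
  by_cases hH : h (σ 0) + h (σ 1) = 0
  · exact eq_zero_of_forall_subset_of_add_eq_zero (fun i => ha (σ i)) hsh hp hpq hH huvσ
  · exact eq_zero_of_forall_subset_of_add_ne_zero (fun i => ha (σ i)) hsh hpq hH huvσ

theorem moments_eq_zero_of_line {ν m a h : Fin 4 → ℝ} (ha : ∀ i, 0 < a i)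
    (hpos : ∀ k i, 0 < m k * h i + a i) (hsh : ∑ i, h i = 0) (hh : h ≠ 0) (hν : ∑ k, ν k = 0)
    (hdata : ∀ S : Finset (Fin 4), ∀ i ∈ S, ∑ k, ν k * PLchoice (m k • h + a) S i = 0) :
    ∑ k, ν k * m k = 0 ∧ ∑ k, ν k * m k ^ 2 = 0 ∧ ∑ k, ν k * m k ^ 3 = 0 := by
  have hPL : ∀ S k i, PLchoice (m k • h + a) S i
      = (m k * h i + a i) / (m k * ∑ j ∈ S, h j + ∑ j ∈ S, a j) := by
    intro S k i
    simp [PLchoice, Finset.sum_add_distrib, Finset.mul_sum]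
  have hden : ∀ S : Finset (Fin 4), S.Nonempty → ∀ k, m k * ∑ j ∈ S, h j + ∑ j ∈ S, a j ≠ 0 := by
    intro S hS k
    rw [Finset.mul_sum, ← Finset.sum_add_distrib]
    exact (Finset.sum_pos (fun i _ => hpos k i) hS).ne'
  have h1 : ∑ k, ν k * m k = 0 := by
    obtain ⟨i, hi⟩ := Function.ne_iff.mp hh
    have hA : (0 : ℝ) < ∑ j, a j := Finset.sum_pos (fun j _ => ha j) Finset.univ_nonempty
    have hsplit : ∑ k, ν k * PLchoice (m k • h + a) univ i
        = (∑ k, ν k * m k) * h i / ∑ j, a j + (∑ k, ν k) * a i / ∑ j, a j := by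
      simp only [hPL, hsh, mul_zero, zero_add, Finset.sum_mul, Finset.sum_div,
        ← Finset.sum_add_distrib]
      exact Finset.sum_congr rfl fun k _ => by ring
    have := hdata univ i (Finset.mem_univ i)
    rw [hsplit, hν, zero_mul, zero_div, add_zero] at this
    exact (mul_eq_zero.mp ((div_eq_zero_iff.mp this).resolve_right hA.ne')).resolve_right hi
  have h23 := eq_zero_of_forall_subset ha hsh hh fun S hH i hi j hj hij => by
    obtain ⟨k, hk, hδ⟩ := exists_mem_mul_sum_ne hH hi hj hij
    refine moment_combination_eq_zero_of_sum_inv_eq_zero hν h1 hH (hden S ⟨i, hi⟩) ?_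
    refine sum_inv_eq_zero_of_sum_div_eq_zero hν hH hδ (hden S ⟨i, hi⟩) ?_
    simpa [hPL, mul_comm] using hdata S k hk
  refine ⟨h1, h23.1, ?_⟩
  linear_combination -h23.2 + (∑ k, m k) * h23.1

theorem collinear_of_two_relations_of_zero_one {V : Type*} [AddCommGroup V] [Module ℝ V]
    {x : Fin 4 → V} {P Q : Fin 4 → ℝ} (hP : ∑ k, P k = 0) (hQ : ∑ k, Q k = 0)
    (hPx : ∑ k, P k • x k = 0) (hQx : ∑ k, Q k • x k = 0) (h01 : P 0 * Q 1 ≠ P 1 * Q 0) :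
    Collinear ℝ (Set.range x) := by
  rw [Fin.sum_univ_four] at hP hQ hPx hQx
  rw [show P 2 = -(P 0 + P 1 + P 3) by linear_combination hP] at hPx
  rw [show Q 2 = -(Q 0 + Q 1 + Q 3) by linear_combination hQ] at hQx
  set D := P 0 * Q 1 - P 1 * Q 0
  have hD : D ≠ 0 := sub_ne_zero.mpr h01
  -- eliminating `x 1`, resp. `x 0`, between the two relations puts `x 0`, resp. `x 1`,
  -- on the line through `x 2` and `x 3`
  have hx0 : D • x 0 = D • x 2 + (P 1 * Q 3 - P 3 * Q 1) • (x 3 - x 2) := by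
    linear_combination (norm := module) Q 1 • hPx - P 1 • hQx
  have hx1 : D • x 1 = D • x 2 + (P 3 * Q 0 - P 0 * Q 3) • (x 3 - x 2) := by
    linear_combination (norm := module) P 0 • hQx - Q 0 • hPx
  have on_line : ∀ {y : V} {c : ℝ}, D • y = D • x 2 + c • (x 3 - x 2) →
      y = (D⁻¹ * c) • (x 3 - x 2) +ᵥ x 2 := by
    intro y c h
    rw [vadd_eq_add, mul_smul, ← smul_right_inj hD, smul_add, smul_inv_smul₀ hD, h, add_comm]
  rw [collinear_iff_of_mem (Set.mem_range_self 2)]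
  refine ⟨x 3 - x 2, ?_⟩
  rintro _ ⟨i, rfl⟩
  fin_cases i
  exacts [⟨_, on_line hx0⟩, ⟨_, on_line hx1⟩, ⟨0, by simp⟩, ⟨1, by simp⟩]

theorem collinear_of_two_relations {V : Type*} [AddCommGroup V] [Module ℝ V] {x : Fin 4 → V}
    {P Q : Fin 4 → ℝ} (hP : ∑ k, P k = 0) (hQ : ∑ k, Q k = 0) (hPx : ∑ k, P k • x k = 0)
    (hQx : ∑ k, Q k • x k = 0) {j k : Fin 4} (hjk : P j * Q k ≠ P k * Q j) :
    Collinear ℝ (Set.range x) := by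
  obtain ⟨σ, rfl, rfl⟩ := Fin.exists_perm_apply_zero_one j k fun h => hjk (by rw [h])
  rw [← σ.surjective.range_comp x]
  exact collinear_of_two_relations_of_zero_one (x := fun i => x (σ i)) (by rwa [Equiv.sum_comp σ P])
    (by rwa [Equiv.sum_comp σ Q]) (by rwa [Equiv.sum_comp σ fun i => P i • x i])
    (by rwa [Equiv.sum_comp σ fun i => Q i • x i]) hjk

theorem collinear_of_eq_on_two_coords {s : Set (Fin 4 → ℝ)} {c : ℝ} (hs : ∀ y ∈ s, ∑ i, y i = c)
    {l₁ l₂ : Fin 4} (hl : l₁ ≠ l₂) {c₁ c₂ : ℝ} (h₁ : ∀ y ∈ s, y l₁ = c₁) (h₂ : ∀ y ∈ s, y l₂ = c₂) :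
    Collinear ℝ s := by
  rcases s.eq_empty_or_nonempty with rfl | ⟨y₀, hy₀⟩
  · exact collinear_empty ℝ (Fin 4 → ℝ)
  obtain ⟨r₁, r₂, h11, h12, h21, h22, hr, huniv⟩ := Fin.exists_univ_eq_of_ne l₁ l₂ hl
  rw [collinear_iff_of_mem hy₀]
  refine ⟨Pi.single r₁ 1 - Pi.single r₂ 1, fun y hy => ⟨y r₁ - y₀ r₁, ?_⟩⟩
  have hsum : ∀ z ∈ s, z l₁ + z l₂ + z r₁ + z r₂ = c := fun z hz => by
    rw [← hs z hz, huniv, Finset.sum_insert (by simp [hl, h11, h12]),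
      Finset.sum_insert (by simp [h21, h22]), Finset.sum_pair hr]
    ring
  have hy₁ := h₁ y hy; have hy₂ := h₂ y hy
  have h₀₁ := h₁ y₀ hy₀; have h₀₂ := h₂ y₀ hy₀
  funext i
  have hi : i ∈ ({l₁, l₂, r₁, r₂} : Finset (Fin 4)) := huniv ▸ Finset.mem_univ i
  simp only [Finset.mem_insert, Finset.mem_singleton] at hi
  rcases hi with rfl | rfl | rfl | rfl
  · simp [h11, h12, hy₁, h₀₁]
  · simp [h21, h22, hy₂, h₀₂]
  · simp [hr]
  · simp only [Pi.vadd_apply', Pi.smul_apply, Pi.sub_apply, Pi.single_eq_of_ne (Ne.symm hr),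
      Pi.single_eq_same, smul_eq_mul, vadd_eq_add]
    linarith [hsum y hy, hsum y₀ hy₀]

theorem exists_two_ne_zero_of_sum_mul_eq_zero {ι : Type*} [Fintype ι] {z a : ι → ℝ} (hz : z ≠ 0)
    (ha : ∀ i, 0 < a i) (h : ∑ i, z i * a i = 0) : ∃ i j, i ≠ j ∧ z i ≠ 0 ∧ z j ≠ 0 := by
  obtain ⟨i, hi⟩ := Function.ne_iff.mp hz
  by_contra! hsingle
  rw [Finset.sum_eq_single i (fun j _ hji => by rw [hsingle i j hji.symm hi, zero_mul])
    (by simp)] at h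
  exact hi (by simpa [(ha i).ne'] using h)

theorem exists_ne_forall_sum_mul_eq_zero {ι : Type*} [Fintype ι] [DecidableEq ι] {x X : ι → ι → ℝ}
    {ν : ι → ℝ} (hν : ν ≠ 0) (hνx : ∀ r, ∑ k, ν k * x k r = 0)
    (hX : ∀ l r, r ≠ l → ∑ k, X l k * x k r = 0) {k₀ : ι} (hpos : ∀ r, 0 < x k₀ r) :
    ∃ l₁ l₂, l₁ ≠ l₂ ∧ (∀ r, ∑ k, X l₁ k * x k r = 0) ∧ ∀ r, ∑ k, X l₂ k * x k r = 0 := by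
  let M : Matrix ι ι ℝ := Matrix.of fun r k => x k r
  have hdet : M.det = 0 := Matrix.exists_mulVec_eq_zero_iff.mp ⟨ν, hν, funext fun r => by
    simpa [M, Matrix.mulVec, dotProduct, mul_comm] using hνx r⟩
  obtain ⟨z, hz, hzM⟩ := Matrix.exists_vecMul_eq_zero_iff.mpr hdet
  have hzx : ∀ k, ∑ r, z r * x k r = 0 := fun k => by
    simpa [M, Matrix.vecMul, dotProduct] using congrFun hzM k
  -- pairing with `z` leaves only the coordinate `l`
  have hdiag : ∀ l, z l * ∑ k, X l k * x k l = 0 := by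
    intro l
    have : ∑ r, z r * ∑ k, X l k * x k r = 0 := by
      simp_rw [Finset.mul_sum]
      rw [Finset.sum_comm]
      refine Finset.sum_eq_zero fun k _ => ?_
      rw [← mul_zero (X l k), ← hzx k, Finset.mul_sum]
      exact Finset.sum_congr rfl fun r _ => by ring
    rwa [Finset.sum_eq_single l (fun r _ hrl => by rw [hX l r hrl, mul_zero]) (by simp)] at this
  obtain ⟨l₁, l₂, hl, h₁, h₂⟩ := exists_two_ne_zero_of_sum_mul_eq_zero hz hpos (hzx k₀)
  have hvanish : ∀ l, z l ≠ 0 → ∀ r, ∑ k, X l k * x k r = 0 := fun l hl r => by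
    by_cases hrl : r = l
    · subst hrl
      exact (mul_eq_zero.mp (hdiag r)).resolve_left hl
    · exact hX l r hrl
  exact ⟨l₁, l₂, hl, hvanish l₁ h₁, hvanish l₂ h₂⟩

section ChoiceRelations

variable {n : ℕ} {κ : Type*} [Fintype κ] {ν : κ → ℝ} {x : κ → Fin n → ℝ}

theorem sum_mul_eq_zero_of_choice (hx : ∀ k, IsPLParam (x k))
    (hdata : ∀ S : Finset (Fin n), ∀ i ∈ S, ∑ k, ν k * PLchoice (x k) S i = 0) (r : Fin n) :
    ∑ k, ν k * x k r = 0 := by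
  simpa [PLchoice, fun k => (hx k).2] using hdata univ r (Finset.mem_univ r)

theorem sum_odds_mul_eq_zero_of_choice (hx : ∀ k, IsPLParam (x k))
    (hdata : ∀ S : Finset (Fin n), ∀ i ∈ S, ∑ k, ν k * PLchoice (x k) S i = 0) {l r : Fin n}
    (hrl : r ≠ l) : ∑ k, ν k * (x k l / (1 - x k l)) * x k r = 0 := by
  have hl : ∀ k, 1 - x k l ≠ 0 := fun k => (sub_pos.mpr ((hx k).lt_one hrl.symm)).ne'
  have herase := hdata (univ.erase l) r (Finset.mem_erase.mpr ⟨hrl, Finset.mem_univ r⟩)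
  simp only [PLchoice, Finset.sum_erase_eq_sub (Finset.mem_univ l), (hx _).2] at herase
  calc ∑ k, ν k * (x k l / (1 - x k l)) * x k r
      = ∑ k, (ν k * (x k r / (1 - x k l)) - ν k * x k r) :=
        Finset.sum_congr rfl fun k _ => by field_simp [hl k]; ring
    _ = 0 := by rw [Finset.sum_sub_distrib, herase, sum_mul_eq_zero_of_choice hx hdata r, sub_zero]

end ChoiceRelations

theorem collinear_or_apply_eq {x : Fin 4 → Fin 4 → ℝ} {ν : Fin 4 → ℝ}
    (hx : ∀ k, IsPLParam (x k)) (hν : ∀ k, ν k ≠ 0) (hνs : ∑ k, ν k = 0)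
    (hνx : ∀ r, ∑ k, ν k * x k r = 0) {l : Fin 4}
    (hl : ∀ r, ∑ k, ν k * (x k l / (1 - x k l)) * x k r = 0) :
    Collinear ℝ (Set.range x) ∨ ∀ k, x k l = x 0 l := by
  set o : Fin 4 → ℝ := fun k => x k l / (1 - x k l)
  by_cases hminor : ∃ j k, ν j * (ν k * o k) ≠ ν k * (ν j * o j)
  · obtain ⟨j, k, hjk⟩ := hminor
    have hQ : ∑ k, ν k * o k = 0 := by
      have := Finset.sum_eq_zero (s := univ) fun r _ => hl r
      rw [Finset.sum_comm] at this
      simpa [← Finset.mul_sum, fun k => (hx k).2] using this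
    refine Or.inl (collinear_of_two_relations (Q := fun k => ν k * o k) hνs hQ ?_ ?_ hjk)
    · exact funext fun r => by simpa using hνx r
    · exact funext fun r => by simpa using hl r
  · push Not at hminor
    obtain ⟨j, hj⟩ := exists_ne l
    refine Or.inr fun k => ?_
    have hk := sub_pos.mpr ((hx k).lt_one hj.symm)
    have h0 := sub_pos.mpr ((hx 0).lt_one hj.symm)
    have hok : ν 0 * ν k * (o k - o 0) = 0 := by linear_combination hminor 0 k
    simp only [mul_eq_zero, hν, false_or, sub_eq_zero, o] at hok
    field_simp at hok
    linarith

theorem collinear_of_choice {x : Fin 4 → Fin 4 → ℝ} {ν : Fin 4 → ℝ} (hx : ∀ k, IsPLParam (x k))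
    (hν : ∀ k, ν k ≠ 0) (hνs : ∑ k, ν k = 0)
    (hdata : ∀ S : Finset (Fin 4), ∀ i ∈ S, ∑ k, ν k * PLchoice (x k) S i = 0) :
    Collinear ℝ (Set.range x) := by
  have hνx := sum_mul_eq_zero_of_choice hx hdata
  obtain ⟨l₁, l₂, hl, h₁, h₂⟩ := exists_ne_forall_sum_mul_eq_zero
    (X := fun l k => ν k * (x k l / (1 - x k l))) (Function.ne_iff.mpr ⟨0, hν 0⟩) hνx
    (fun l r hrl => sum_odds_mul_eq_zero_of_choice hx hdata hrl) (hx 0).1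
  rcases collinear_or_apply_eq hx hν hνs hνx h₁ with hcol | he₁
  · exact hcol
  rcases collinear_or_apply_eq hx hν hνs hνx h₂ with hcol | he₂
  · exact hcol
  refine collinear_of_eq_on_two_coords (c := 1) ?_ hl (c₁ := x 0 l₁) (c₂ := x 0 l₂) ?_ ?_ <;>
    rintro _ ⟨k, rfl⟩
  exacts [(hx k).2, he₁ k, he₂ k]

/-- The weights of the signed measure `w δ_a + (1 - w) δ_b - w' δ_c - (1 - w') δ_d`. -/
def signedWeights (w w' : ℝ) : Fin 4 → ℝ :=
  ![w, 1 - w, -w', -(1 - w')]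

theorem sum_signedWeights (w w' : ℝ) : ∑ k, signedWeights w w' k = 0 := by
  simp only [signedWeights, Fin.sum_univ_four, Matrix.cons_val_zero, Matrix.cons_val_one,
    Matrix.cons_val]
  ring

theorem signedWeights_ne_zero {w w' : ℝ} (hw : 0 < w ∧ w < 1) (hw' : 0 < w' ∧ w' < 1)
    (k : Fin 4) : signedWeights w w' k ≠ 0 := by
  fin_cases k
  exacts [hw.1.ne', (sub_pos.2 hw.2).ne', neg_ne_zero.2 hw'.1.ne',
    neg_ne_zero.2 (sub_pos.2 hw'.2).ne']

theorem sameMixture_of_line {w w' : ℝ} (hw : 0 < w ∧ w < 1) (hw' : 0 < w' ∧ w' < 1)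
    {a v t : Fin 4 → ℝ} (ha : IsPLParam a) (hx : ∀ k, IsPLParam (t k • v + a))
    (hdata : ∀ S : Finset (Fin 4), ∀ i ∈ S,
      ∑ k, signedWeights w w' k * PLchoice (t k • v + a) S i = 0) :
    SameMixture w (t 0 • v + a) (t 1 • v + a) w' (t 2 • v + a) (t 3 • v + a) := by
  by_cases hdeg : ∀ k, t k • v = 0
  · simp only [hdeg, zero_add]
    exact .of_eq rfl rfl rfl
  push Not at hdeg
  obtain ⟨k₀, hk₀⟩ := hdeg
  have hsv : ∑ i, v i = 0 := by
    have hsum := (hx k₀).2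
    simp only [Pi.add_apply, Pi.smul_apply, smul_eq_mul, Finset.sum_add_distrib,
      ← Finset.mul_sum, ha.2, add_eq_right, mul_eq_zero] at hsum
    exact hsum.resolve_left fun h => hk₀ (by rw [h, zero_smul])
  obtain ⟨h1, h2, h3⟩ := moments_eq_zero_of_line ha.1 (fun k i => (hx k).1 i) hsv
    (fun h => hk₀ (by rw [h, smul_zero])) (sum_signedWeights w w') hdata
  simp only [signedWeights, Fin.sum_univ_four, Matrix.cons_val_zero, Matrix.cons_val_one,
    Matrix.cons_val] at h1 h2 h3
  exact (sameMixture_of_moments hw hw' (by linear_combination h1) (by linear_combination h2)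
    (by linear_combination h3)).map fun s => s • v + a

theorem sameMixture_of_choice_fin4 {w w' : ℝ} (hw : 0 < w ∧ w < 1) (hw' : 0 < w' ∧ w' < 1)
    {a b c d : Fin 4 → ℝ} (ha : IsPLParam a) (hb : IsPLParam b) (hc : IsPLParam c)
    (hd : IsPLParam d)
    (hdata : ∀ S : Finset (Fin 4), ∀ i ∈ S, w * PLchoice a S i + (1 - w) * PLchoice b S i
      = w' * PLchoice c S i + (1 - w') * PLchoice d S i) :
    SameMixture w a b w' c d := by
  set x : Fin 4 → Fin 4 → ℝ := ![a, b, c, d]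
  have hx : ∀ k, IsPLParam (x k) := by intro k; fin_cases k <;> assumption
  have hdata' : ∀ S : Finset (Fin 4), ∀ i ∈ S,
      ∑ k, signedWeights w w' k * PLchoice (x k) S i = 0 := by
    intro S i hi
    simp only [signedWeights, Fin.sum_univ_four, Matrix.cons_val_zero, Matrix.cons_val_one,
      Matrix.cons_val, x]
    linear_combination hdata S i hi
  obtain ⟨v, hv⟩ := (collinear_iff_of_mem (Set.mem_range_self 0)).mp
    (collinear_of_choice hx (signedWeights_ne_zero hw hw') (sum_signedWeights w w') hdata')
  choose t ht using fun k => hv (x k) (Set.mem_range_self k)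
  have hline : ∀ k, x k = t k • v + a := ht
  have key := sameMixture_of_line hw hw' ha (fun k => hline k ▸ hx k)
    fun S i hi => by simpa only [hline] using hdata' S i hi
  simp only [← hline] at key
  exact key

noncomputable def PLrestrict {m n : ℕ} (θ : Fin m → ℝ) (f : Fin n ↪ Fin m) : Fin n → ℝ :=
  (∑ i, θ (f i))⁻¹ • (θ ∘ f)

section Restrict

variable {m n : ℕ} {θ : Fin m → ℝ} (f : Fin n ↪ Fin m)

theorem isPLParam_PLrestrict [NeZero n] (hθ : ∀ i, 0 < θ i) : IsPLParam (PLrestrict θ f) := by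
  have hsum : 0 < ∑ i, θ (f i) := Finset.sum_pos (fun i _ => hθ (f i)) Finset.univ_nonempty
  refine ⟨fun i => mul_pos (inv_pos.mpr hsum) (hθ (f i)), ?_⟩
  simp [PLrestrict, ← Finset.mul_sum, hsum.ne']

theorem PLchoice_PLrestrict [NeZero n] (hθ : ∀ i, 0 < θ i) (S : Finset (Fin n)) (i : Fin n) :
    PLchoice (PLrestrict θ f) S i = PLchoice θ (S.map f) (f i) := by
  have hsum : 0 < ∑ i, θ (f i) := Finset.sum_pos (fun i _ => hθ (f i)) Finset.univ_nonempty
  simp [PLchoice, PLrestrict, ← Finset.mul_sum, Finset.sum_map,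
    mul_div_mul_left _ _ (inv_ne_zero hsum.ne')]

end Restrict

theorem mul_eq_mul_of_PLrestrict_eq {m n : ℕ} [NeZero n] {u v : Fin m → ℝ} (hu : ∀ i, 0 < u i)
    (hv : ∀ i, 0 < v i) {f : Fin n ↪ Fin m} (h : PLrestrict u f = PLrestrict v f) (i j : Fin n) :
    u (f i) * v (f j) = u (f j) * v (f i) := by
  have hU : 0 < ∑ i, u (f i) := Finset.sum_pos (fun i _ => hu (f i)) Finset.univ_nonempty
  have hV : 0 < ∑ i, v (f i) := Finset.sum_pos (fun i _ => hv (f i)) Finset.univ_nonempty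
  have hi := congrFun h i
  have hj := congrFun h j
  simp only [PLrestrict, Pi.smul_apply, Function.comp_apply, smul_eq_mul] at hi hj
  field_simp at hi hj
  have : (∑ i, u (f i)) * (u (f i) * v (f j) - u (f j) * v (f i)) = 0 := by
    linear_combination u (f j) * hi - u (f i) * hj
  simpa [hU.ne', sub_eq_zero] using this

theorem sameMixture_PLrestrict {m : ℕ} {α α' : ℝ} (hα : 0 < α ∧ α < 1) (hα' : 0 < α' ∧ α' < 1)
    {θ1 θ2 θ1' θ2' : Fin m → ℝ} (hθ1 : ∀ i, 0 < θ1 i) (hθ2 : ∀ i, 0 < θ2 i)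
    (hθ1' : ∀ i, 0 < θ1' i) (hθ2' : ∀ i, 0 < θ2' i)
    (heq : ∀ A' : Finset (Fin m), (A'.card = 2 ∨ A'.card = 3 ∨ A'.card = 4) → ∀ a ∈ A',
      α * PLchoice θ1 A' a + (1 - α) * PLchoice θ2 A' a
        = α' * PLchoice θ1' A' a + (1 - α') * PLchoice θ2' A' a)
    (f : Fin 4 ↪ Fin m) :
    SameMixture α (PLrestrict θ1 f) (PLrestrict θ2 f) α' (PLrestrict θ1' f) (PLrestrict θ2' f) := by
  refine sameMixture_of_choice_fin4 hα hα' (isPLParam_PLrestrict f hθ1)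
    (isPLParam_PLrestrict f hθ2) (isPLParam_PLrestrict f hθ1') (isPLParam_PLrestrict f hθ2')
    fun S i hi => ?_
  simp only [PLchoice_PLrestrict f hθ1, PLchoice_PLrestrict f hθ2, PLchoice_PLrestrict f hθ1',
    PLchoice_PLrestrict f hθ2']
  by_cases hS : S.card = 1
  · obtain ⟨j, rfl⟩ := Finset.card_eq_one.mp hS
    obtain rfl := Finset.mem_singleton.mp hi
    simp only [Finset.map_singleton, PLchoice_singleton (hθ1 _).ne', PLchoice_singleton (hθ2 _).ne',
      PLchoice_singleton (hθ1' _).ne', PLchoice_singleton (hθ2' _).ne']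
    ring
  · have hle : S.card ≤ 4 := (Finset.card_le_univ S).trans_eq (Fintype.card_fin 4)
    have hpos : 0 < S.card := Finset.card_pos.mpr ⟨i, hi⟩
    exact heq (S.map f) (by rw [Finset.card_map]; omega) (f i) (Finset.mem_map_of_mem f hi)

theorem exists_fin4_embedding {m : ℕ} (hm : 4 ≤ m) {p q : Fin m} (hpq : p ≠ q) (k : Fin m) :
    ∃ f : Fin 4 ↪ Fin m, f 0 = p ∧ f 1 = q ∧ k ∈ Set.range f := by
  have avoid : ∀ s : Finset (Fin m), s.card < 4 → ∃ r, r ∉ s := fun s hs => by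
    obtain ⟨r, -, hr⟩ := Finset.exists_mem_notMem_of_card_lt_card (t := univ) (s := s)
      (by rw [Finset.card_univ, Fintype.card_fin]; omega)
    exact ⟨r, hr⟩
  obtain ⟨r, hr, hkr⟩ : ∃ r, r ∉ ({p, q} : Finset (Fin m)) ∧ k ∈ ({p, q, r} : Finset (Fin m)) := by
    by_cases hk : k ∈ ({p, q} : Finset (Fin m))
    · obtain ⟨r, hr⟩ := avoid {p, q} (Finset.card_le_two.trans_lt (by norm_num))
      refine ⟨r, hr, ?_⟩
      simp only [Finset.mem_insert, Finset.mem_singleton] at hk ⊢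
      tauto
    · exact ⟨k, hk, by simp⟩
  obtain ⟨s, hs⟩ := avoid {p, q, r} (Finset.card_le_three.trans_lt (by norm_num))
  simp only [Finset.mem_insert, Finset.mem_singleton, not_or] at hr hs hkr
  refine ⟨⟨![p, q, r, s], fun i j hij => ?_⟩, rfl, rfl, ?_⟩
  · fin_cases i <;> fin_cases j <;> simp_all [eq_comm]
  · rcases hkr with rfl | rfl | rfl
    exacts [⟨0, rfl⟩, ⟨1, rfl⟩, ⟨2, rfl⟩]

theorem IsPLParam.eq_of_forall_PLrestrict_eq {m : ℕ} (hm : 4 ≤ m) {u v : Fin m → ℝ}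
    (hu : IsPLParam u) (hv : IsPLParam v) {p q : Fin m} (hpq : p ≠ q)
    (h : ∀ f : Fin 4 ↪ Fin m, f 0 = p → f 1 = q → PLrestrict u f = PLrestrict v f) : u = v := by
  refine hu.eq_of_mul_eq_mul hv p fun k => ?_
  obtain ⟨f, hf0, hf1, j, rfl⟩ := exists_fin4_embedding hm hpq k
  rw [← hf0]
  exact mul_eq_mul_of_PLrestrict_eq hu.1 hv.1 (h f hf0 hf1) 0 j

/-- **Identifiability of 2-PL from choice-2,3,4 data** (Theorem 2(c)): over
`m ≥ 4` alternatives, if two 2-PL parameters assign the same marginal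
probability to every choice order `(A', a)` with `|A'| ∈ {2,3,4}` and `a ∈ A'`,
then their mixing measures coincide. -/
theorem twoPL_identifiable_choice234
    (m : ℕ) (hm : 4 ≤ m)
    (α α' : ℝ) (hα : 0 < α ∧ α < 1) (hα' : 0 < α' ∧ α' < 1)
    (θ1 θ2 θ1' θ2' : Fin m → ℝ)
    (hθ1 : IsPLParam θ1) (hθ2 : IsPLParam θ2)
    (hθ1' : IsPLParam θ1') (hθ2' : IsPLParam θ2')
    (heq : ∀ A' : Finset (Fin m), (A'.card = 2 ∨ A'.card = 3 ∨ A'.card = 4) →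
      ∀ a ∈ A',
        α * PLchoice θ1 A' a + (1 - α) * PLchoice θ2 A' a
          = α' * PLchoice θ1' A' a + (1 - α') * PLchoice θ2' A' a) :
    mixing2 α θ1 θ2 = mixing2 α' θ1' θ2' := by
  let p : Fin m := ⟨0, by omega⟩
  obtain ⟨q, hpq, hsep⟩ : ∃ q, p ≠ q ∧ (θ1 ≠ θ2 → θ1 p * θ2 q ≠ θ1 q * θ2 p) := by
    by_cases h12 : θ1 = θ2
    · exact ⟨⟨1, by omega⟩, by simp [p, Fin.ext_iff], absurd h12⟩
    · obtain ⟨q, hq⟩ : ∃ q, θ1 p * θ2 q ≠ θ1 q * θ2 p := by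
        by_contra! h
        exact h12 (hθ1.eq_of_mul_eq_mul hθ2 p h)
      exact ⟨q, by rintro rfl; exact hq rfl, fun _ => hq⟩
  let ι := {f : Fin 4 ↪ Fin m // f 0 = p ∧ f 1 = q}
  have : Nonempty ι :=
    let ⟨f, hf0, hf1, _⟩ := exists_fin4_embedding hm hpq p
    ⟨⟨f, hf0, hf1⟩⟩
  refine SameMixture.mixing2_eq <| SameMixture.of_forall (s := {θ | IsPLParam θ})
    (ρ := fun (f : ι) θ => PLrestrict θ f.1) (fun θ => θ q / θ p)
    (fun u hu v hv h => hu.eq_of_forall_PLrestrict_eq hm hv hpq fun f hf0 hf1 => h ⟨f, hf0, hf1⟩)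
    (fun f u hu v hv h => ?_) hθ1 hθ2 hθ1' hθ2' (fun h12 => ?_)
    (fun f => sameMixture_PLrestrict hα hα' hθ1.1 hθ2.1 hθ1'.1 hθ2'.1 heq f.1)
  · have := mul_eq_mul_of_PLrestrict_eq hu.1 hv.1 h 0 1
    rw [f.2.1, f.2.2] at this
    rw [div_eq_div_iff (hu.1 p).ne' (hv.1 p).ne']
    linear_combination -this
  · rw [Ne, div_eq_div_iff (hθ1.1 p).ne' (hθ2.1 p).ne']
    exact fun h => hsep h12 (by linear_combination -h)
end
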